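/- Let a_⊥ satisfy u(a_⊥) = 1, and let X, X' be disjoint finite sets of items (not containing a_⊥) such that w(a) > w(a_⊥) for every a in X ∪ X'. Then f((DesW(X), a_⊥), u, w) ≤ f((DesW(X ∪ X'), a_⊥), u, w), where DesW(Y) denotes the list of items of Y sorted in descending order of w. In words, including additional items with weight above w(a_⊥) never decreases the optimally-ordered cascading reward. -/

import Mathlib

/-- The cascading reward function. -/
noncomputable def cascadeF {α : Type*} (u w : α → ℝ) : List α → ℝ
  | [] => 0
  | a :: t => u a * w a + (1 - u a) * cascadeF u w t

/-!
Each step of the cascade is a convex combination `u a * w a + (1 - u a) * (rest)`, so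
exchanging two adjacent items gains `u a * u b * (w b - w a)`: moving a heavier item forward
never hurts. Now compare a sub-list `L` of the descending list `LU` with `LU`, head `b` first.
If `b ∈ L`, move it to the front of `L` and recurse. If not, prepending `b` can only help,
because everything after it, down to `a_⊥` (which stops the cascade, as `u a_⊥ = 1`), has
weight at most `w b`, so the rest of the cascade is worth at most `w b`.
-/

section Cascade

variable {α : Type*} {u w : α → ℝ}

theorem cascadeF_cons_le_cons {a : α} {s t : List α} (ha : u a ≤ 1)
    (h : cascadeF u w s ≤ cascadeF u w t) : cascadeF u w (a :: s) ≤ cascadeF u w (a :: t) := by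
  simp only [cascadeF]
  gcongr

theorem cascadeF_le_cascadeF_cons {a : α} {t : List α} (ha : 0 ≤ u a)
    (h : cascadeF u w t ≤ w a) : cascadeF u w t ≤ cascadeF u w (a :: t) := by
  simp only [cascadeF]
  nlinarith

theorem cascadeF_cons_cons_le_swap {a b : α} {t : List α} (ha : 0 ≤ u a) (hb : 0 ≤ u b)
    (hab : w a ≤ w b) : cascadeF u w (a :: b :: t) ≤ cascadeF u w (b :: a :: t) := by
  simp only [cascadeF]
  nlinarith [mul_nonneg (mul_nonneg ha hb) (sub_nonneg.2 hab)]

variable (hu : ∀ a, 0 ≤ u a ∧ u a ≤ 1)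
include hu

theorem cascadeF_append_le {W : ℝ} {t : List α} (ht : cascadeF u w t ≤ W) :
    ∀ {L : List α}, (∀ a ∈ L, w a ≤ W) → cascadeF u w (L ++ t) ≤ W
  | [], _ => ht
  | a :: L, hL => by
    have ih := cascadeF_append_le ht fun x hx => hL x (List.mem_cons_of_mem a hx)
    have hwa := mul_le_mul_of_nonneg_left (hL a List.mem_cons_self) (hu a).1
    have hrest := mul_le_mul_of_nonneg_left ih (sub_nonneg.2 (hu a).2)
    simp only [List.cons_append, cascadeF]
    linarith

theorem cascadeF_append_le_cons_erase [DecidableEq α] {b : α} {t : List α} :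
    ∀ {L : List α}, b ∈ L → (∀ a ∈ L, w a ≤ w b) →
      cascadeF u w (L ++ t) ≤ cascadeF u w (b :: (L.erase b ++ t))
  | c :: L, hb, hL => by
    by_cases hcb : c = b
    · subst hcb
      simp
    · have hbL : b ∈ L := (List.mem_cons.mp hb).resolve_left (Ne.symm hcb)
      have ih := cascadeF_append_le_cons_erase (t := t) hbL
        fun x hx => hL x (List.mem_cons_of_mem c hx)
      rw [List.erase_cons_tail (by simpa using hcb)]
      calc cascadeF u w (c :: (L ++ t))
          ≤ cascadeF u w (c :: b :: (L.erase b ++ t)) := cascadeF_cons_le_cons (hu c).2 ih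
        _ ≤ cascadeF u w (b :: c :: (L.erase b ++ t)) :=
          cascadeF_cons_cons_le_swap (hu c).1 (hu b).1 (hL c List.mem_cons_self)

theorem cascadeF_append_le_of_subperm [DecidableEq α] {t : List α} :
    ∀ {LU L : List α}, LU.Pairwise (fun a b => w b ≤ w a) →
      (∀ a ∈ LU, cascadeF u w t ≤ w a) → L.Subperm LU →
      cascadeF u w (L ++ t) ≤ cascadeF u w (LU ++ t)
  | [], L, _, _, hL => by simp_all
  | b :: T, L, hsorted, ht, hL => by
    have hmax : ∀ a ∈ T, w a ≤ w b := fun a ha => List.rel_of_pairwise_cons hsorted ha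
    have herase : (L.erase b).Subperm T := by simpa using hL.erase b
    have ih := cascadeF_append_le_of_subperm hsorted.of_cons
      (fun a ha => ht a (List.mem_cons_of_mem b ha)) herase
    by_cases hbL : b ∈ L
    · calc cascadeF u w (L ++ t)
          ≤ cascadeF u w (b :: (L.erase b ++ t)) :=
            cascadeF_append_le_cons_erase hu hbL fun a ha => by
              rcases List.mem_cons.mp (hL.subset ha) with rfl | haT
              exacts [le_rfl, hmax a haT]
        _ ≤ cascadeF u w (b :: (T ++ t)) := cascadeF_cons_le_cons (hu b).2 ih
    · rw [List.erase_of_not_mem hbL] at ih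
      exact ih.trans <| cascadeF_le_cascadeF_cons (hu b).1 <|
        cascadeF_append_le hu (ht b List.mem_cons_self) hmax

end Cascade

theorem include_items_above_bot_general {α : Type*} [DecidableEq α] (u w : α → ℝ) (bot : α)
    (hu : ∀ a, 0 ≤ u a ∧ u a ≤ 1) (hbot : u bot = 1)
    (X X' : Finset α)
    (hw : ∀ a ∈ X ∪ X', w bot < w a)
    (LX LU : List α)
    (hLXp : LX.Perm X.toList)
    (hLUp : LU.Perm (X ∪ X').toList) (hLUs : LU.Pairwise (fun a b => w b ≤ w a)) :
    cascadeF u w (LX ++ [bot]) ≤ cascadeF u w (LU ++ [bot]) := by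
  have hbot_le : ∀ a ∈ LU, cascadeF u w [bot] ≤ w a := fun a ha => by
    simpa [cascadeF, hbot] using (hw a (by simpa using hLUp.mem_iff.mp ha)).le
  have hsub : LX.Subperm LU := hLXp.subperm_right.mpr <| hLUp.subperm_left.mpr <|
    X.nodup_toList.subperm fun a => by simp +contextual
  exact cascadeF_append_le_of_subperm hu hLUs hbot_le hsub

/-- Including additional items with weight above `w(a_⊥)` never decreases the
optimally-ordered cascading reward:
`f((DesW(X), a_⊥), u, w) ≤ f((DesW(X ∪ X'), a_⊥), u, w)`, where `DesW(Y)` denotes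
a descending-`w` ordering of the finite set `Y`. -/
theorem include_items_above_bot {α : Type*} [DecidableEq α] (u w : α → ℝ) (bot : α)
    (hu : ∀ a, 0 ≤ u a ∧ u a ≤ 1) (hbot : u bot = 1)
    (X X' : Finset α) (hdisj : Disjoint X X')
    (hbX : bot ∉ X) (hbX' : bot ∉ X')
    (hw : ∀ a ∈ X ∪ X', w bot < w a)
    (LX LU : List α)
    (hLXp : LX.Perm X.toList) (hLXs : LX.Pairwise (fun a b => w b ≤ w a))
    (hLUp : LU.Perm (X ∪ X').toList) (hLUs : LU.Pairwise (fun a b => w b ≤ w a)) :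
    cascadeF u w (LX ++ [bot]) ≤ cascadeF u w (LU ++ [bot]) :=
  include_items_above_bot_general u w bot hu hbot X X' hw LX LU hLXp hLUp hLUs
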